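/- arXiv:2511.07228 — 2 statements merged into one kernel-verified Lean document; each statement's English description precedes it below -/
import Mathlib

section
/- For all real b₁, b₂ and all integers i, j ≥ 0, Σ_{l=0}^{∞} B(i−l) · D(l, j) equals I₂ if i = j and 0 otherwise, where the sum has only finitely many nonzero terms since B(p) = 0 for |p| ≥ 2. Equivalently, the entrywise product of the block matrix B₁₁ with entries B₁₁(i,j) = B(i−j) and the block matrix with entries D(i,j) is the identity, so B₁₁⁻¹(i,j) = Σ_{m=0}^{min(i,j)} θ(i−m)ᵀθ(j−m). -/
open Matrix

/-- `θ(j) = [[b₁^j, b₁^j], [0, −b₂^j]]` for `j ≥ 0`. -/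
noncomputable def thetaMat (b₁ b₂ : ℝ) : ℕ → Matrix (Fin 2) (Fin 2) ℝ := fun j =>
  !![b₁ ^ j, b₁ ^ j; 0, -b₂ ^ j]

/-- The Fourier coefficients `B(p)` of `(F(λ))⁻¹`. -/
noncomputable def Bmat (b₁ b₂ : ℝ) : ℤ → Matrix (Fin 2) (Fin 2) ℝ := fun p =>
  if p = 0 then !![2 + b₁ ^ 2 + b₂ ^ 2, -1 - b₂ ^ 2; -1 - b₂ ^ 2, 1 + b₂ ^ 2]
  else if p = 1 ∨ p = -1 then !![-b₁ - b₂, b₂; b₂, -b₂]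
  else 0

/-- `D(l, j) = Σ_{m=0}^{min(l,j)} θ(l−m)ᵀ θ(j−m)`, the candidate entries of `B₁₁⁻¹`. -/
noncomputable def Dmat (b₁ b₂ : ℝ) (l j : ℕ) : Matrix (Fin 2) (Fin 2) ℝ :=
  ∑ m ∈ Finset.range (min l j + 1), (thetaMat b₁ b₂ (l - m))ᵀ * thetaMat b₁ b₂ (j - m)

/-!
Conjugation by the shear `S = !![1, 1; 0, 1]` diagonalises everything: `θ(a)ᵀ θ(c) =
Sᵀ diag(b₁^(a+c), b₂^(a+c)) S`, hence `D(l, j) = Sᵀ diag(G_{b₁}(l, j), G_{b₂}(l, j)) S` with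
`G_b(l, j) = Σ_{m ≤ min(l, j)} b^(l-m) b^(j-m)`, while `B(p) = S⁻¹ diag(t_{b₁}(p), t_{b₂}(p)) S⁻ᵀ`,
where `t_b` is `1 + b²` at `0`, `-b` at `±1` and `0` elsewhere. So the theorem reduces to
`Σ_l t_b(i - l) G_b(l, j) = δ_ij` for `b = b₁, b₂`. This holds because `G_b = ΘΘᵀ` with
`Θ(l, m) = b^(l-m)` lower triangular, and `Θ⁻¹ = I - bN` for the shift `N`; since `NᵀN = I`,
`(ΘΘᵀ)⁻¹ = (I - bN)ᵀ(I - bN)` is the tridiagonal Toeplitz matrix with entries `t_b`. In coordinates this is the recurrence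
`G_b(l + 1, j) = b G_b(l, j) + [l < j] b^(j-l-1)`.
-/

def geomGram (b : ℝ) (l j : ℕ) : ℝ :=
  ∑ m ∈ Finset.range (min l j + 1), b ^ ((l - m) + (j - m))

def tridiagCoeff (b : ℝ) (p : ℤ) : ℝ :=
  if p = 0 then 1 + b ^ 2 else if p = 1 ∨ p = -1 then -b else 0

lemma geomGram_zero_left (b : ℝ) (j : ℕ) : geomGram b 0 j = b ^ j := by
  simp [geomGram]

lemma geomGram_succ_left (b : ℝ) (l j : ℕ) :
    geomGram b (l + 1) j = b * geomGram b l j + if l < j then b ^ (j - (l + 1)) else 0 := by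
  have hterm : ∀ m ∈ Finset.range (min l j + 1),
      b ^ ((l + 1 - m) + (j - m)) = b * b ^ ((l - m) + (j - m)) := fun m hm => by
    rw [← pow_succ']; congr 1; simp only [Finset.mem_range] at hm; omega
  rw [geomGram, geomGram, Finset.mul_sum]
  split_ifs with h
  · rw [show min (l + 1) j + 1 = min l j + 1 + 1 by omega, Finset.sum_range_succ,
      Finset.sum_congr rfl hterm]
    congr 2; omega
  · rw [show min (l + 1) j = min l j by omega, add_zero, Finset.sum_congr rfl hterm]

lemma geomGram_recurrence (b : ℝ) (k j : ℕ) :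
    -b * geomGram b k j + (1 + b ^ 2) * geomGram b (k + 1) j - b * geomGram b (k + 2) j =
      if k + 1 = j then 1 else 0 := by
  rw [geomGram_succ_left b (k + 1), geomGram_succ_left b k]
  rcases lt_trichotomy (k + 1) j with h | rfl | h
  · have hpow : b * b ^ (j - (k + 1 + 1)) = b ^ (j - (k + 1)) := by
      rw [← pow_succ']; congr 1; omega
    rw [if_pos h, if_pos (by omega), if_neg h.ne]
    linear_combination (-1) * hpow
  · rw [if_pos (Nat.lt_succ_self k), if_neg (lt_irrefl _), if_pos rfl, Nat.sub_self, pow_zero]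
    ring
  · rw [if_neg (by omega), if_neg (by omega), if_neg (by omega)]
    ring

lemma geomGram_recurrence_zero (b : ℝ) (j : ℕ) :
    (1 + b ^ 2) * geomGram b 0 j - b * geomGram b 1 j = if 0 = j then 1 else 0 := by
  rw [geomGram_succ_left b 0, geomGram_zero_left]
  rcases Nat.eq_zero_or_pos j with rfl | h
  · rw [if_neg (lt_irrefl 0), if_pos rfl, pow_zero]
    ring
  · have hpow : b * b ^ (j - (0 + 1)) = b ^ j := by
      rw [← pow_succ']; congr 1; omega
    rw [if_pos h, if_neg h.ne]
    linear_combination (-1) * hpow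

lemma tridiagCoeff_zero (b : ℝ) : tridiagCoeff b 0 = 1 + b ^ 2 := by simp [tridiagCoeff]
lemma tridiagCoeff_one (b : ℝ) : tridiagCoeff b 1 = -b := by simp [tridiagCoeff]
lemma tridiagCoeff_neg_one (b : ℝ) : tridiagCoeff b (-1) = -b := by simp [tridiagCoeff]

lemma tridiagCoeff_eq_zero (b : ℝ) {p : ℤ} (hp : 2 ≤ p.natAbs) : tridiagCoeff b p = 0 := by
  rw [tridiagCoeff, if_neg (by omega), if_neg (by omega)]

theorem hasSum_tridiagCoeff_mul_geomGram (b : ℝ) (i j : ℕ) :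
    HasSum (fun l : ℕ => tridiagCoeff b (i - l) * geomGram b l j) (if i = j then 1 else 0) := by
  have hsupp : ∀ s : Finset ℕ, (∀ l ∉ s, 2 ≤ ((i : ℤ) - l).natAbs) →
      HasSum (fun l : ℕ => tridiagCoeff b (i - l) * geomGram b l j)
        (∑ l ∈ s, tridiagCoeff b (i - l) * geomGram b l j) := fun s hs =>
    hasSum_sum_of_ne_finset_zero fun l hl => by rw [tridiagCoeff_eq_zero b (hs l hl), zero_mul]
  rcases i with _ | k
  · convert hsupp {0, 1} (fun l hl => by
      simp only [Finset.mem_insert, Finset.mem_singleton, not_or] at hl; omega) using 1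
    rw [Finset.sum_pair zero_ne_one, show ((0 : ℕ) : ℤ) - (0 : ℕ) = 0 by omega,
      show ((0 : ℕ) : ℤ) - (1 : ℕ) = -1 by omega, tridiagCoeff_zero, tridiagCoeff_neg_one,
      ← geomGram_recurrence_zero]
    ring
  · convert hsupp {k, k + 1, k + 2} (fun l hl => by
      simp only [Finset.mem_insert, Finset.mem_singleton, not_or] at hl; omega) using 1
    rw [Finset.sum_insert (by simp), Finset.sum_pair (by omega),
      show ((k + 1 : ℕ) : ℤ) - (k : ℕ) = 1 by omega,
      show ((k + 1 : ℕ) : ℤ) - (k + 1 : ℕ) = 0 by omega,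
      show ((k + 1 : ℕ) : ℤ) - (k + 2 : ℕ) = -1 by omega, tridiagCoeff_one, tridiagCoeff_zero,
      tridiagCoeff_neg_one, ← geomGram_recurrence]
    ring

def shear : Matrix (Fin 2) (Fin 2) ℝ := !![1, 1; 0, 1]

def shearInv : Matrix (Fin 2) (Fin 2) ℝ := !![1, -1; 0, 1]

lemma shear_mul_shearInv : shear * shearInv = 1 := by
  simp [shear, shearInv, one_fin_two]

lemma shearInv_mul_shear : shearInv * shear = 1 := by
  simp [shear, shearInv, one_fin_two]

lemma thetaMat_transpose_mul (b₁ b₂ : ℝ) (a c : ℕ) :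
    (thetaMat b₁ b₂ a)ᵀ * thetaMat b₁ b₂ c =
      shearᵀ * diagonal (fun k => ![b₁, b₂] k ^ (a + c)) * shear := by
  ext p q
  fin_cases p <;> fin_cases q <;>
    simp [thetaMat, shear, mul_apply, Fin.sum_univ_two, pow_add]

lemma Dmat_eq (b₁ b₂ : ℝ) (l j : ℕ) :
    Dmat b₁ b₂ l j = shearᵀ * diagonal (fun k => geomGram (![b₁, b₂] k) l j) * shear := by
  simp only [Dmat, thetaMat_transpose_mul, ← Finset.sum_mul, ← Finset.mul_sum, geomGram]
  congr
  ext r s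
  by_cases h : r = s <;> simp [Matrix.sum_apply, h]

lemma Bmat_eq (b₁ b₂ : ℝ) (p : ℤ) :
    Bmat b₁ b₂ p = shearInv * diagonal (fun k => tridiagCoeff (![b₁, b₂] k) p) * shearInvᵀ := by
  unfold Bmat tridiagCoeff
  split_ifs <;>
    ext r s <;> fin_cases r <;> fin_cases s <;>
    simp [shearInv, mul_apply, vecMul, dotProduct, Fin.sum_univ_two] <;> ring

lemma Bmat_mul_Dmat (b₁ b₂ : ℝ) (p : ℤ) (l j : ℕ) :
    Bmat b₁ b₂ p * Dmat b₁ b₂ l j = shearInv *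
      diagonal (fun k => tridiagCoeff (![b₁, b₂] k) p * geomGram (![b₁, b₂] k) l j) * shear := by
  rw [Bmat_eq, Dmat_eq, ← diagonal_mul_diagonal]
  simp only [Matrix.mul_assoc]
  rw [← Matrix.mul_assoc shearInvᵀ, ← transpose_mul, shear_mul_shearInv, transpose_one,
    Matrix.one_mul]

/-- `Σ_{l≥0} B(i−l)·D(l,j)` equals `I₂` if `i = j` and `0` otherwise; i.e. the block matrix
with entries `D(i,j) = Σ_{m=0}^{min(i,j)} θ(i−m)ᵀθ(j−m)` is the inverse of the block Toeplitz
matrix `B₁₁(i,j) = B(i−j)`. -/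
theorem stmt10 (b₁ b₂ : ℝ) (i j : ℕ) :
    HasSum (fun l : ℕ => Bmat b₁ b₂ ((i : ℤ) - (l : ℤ)) * Dmat b₁ b₂ l j)
      (if i = j then 1 else 0) := by
  have hdiag :=
    (Pi.hasSum.2 fun k => hasSum_tridiagCoeff_mul_geomGram (![b₁, b₂] k) i j).matrix_diagonal
  have hlimit : shearInv * (diagonal fun _ => if i = j then (1 : ℝ) else 0) * shear =
      if i = j then 1 else 0 := by
    split_ifs <;> simp [shearInv_mul_shear]
  simpa only [Bmat_mul_Dmat, hlimit] using (hdiag.mul_left shearInv).mul_right shear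
end

section
/- Let a(0), a(1) ∈ ℝ² and set a(j) = 0 for j ≥ 2. Define c(j) = D(j,0)a(0) + D(j,1)a(1) for j ≥ 0. Then the vectors c(j) solve the block Toeplitz system: B(0)c(0) + B(−1)c(1) = a(0), and for every j ≥ 1, B(1)c(j−1) + B(0)c(j) + B(−1)c(j+1) = a(j); in particular B(1)c(j−1) + B(0)c(j) + B(−1)c(j+1) = 0 for all j ≥ 2. -/
open Matrix

/-!
The sequences `D(·, 0)` and `D(·, 1)` are the first two block columns of the inverse of the block
Toeplitz operator with coefficients `B`, and `c` is the corresponding combination of them.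
The columns of `θ(k)ᵀ` are `b₁ᵏ (1, 1)` and `b₂ᵏ (0, -1)`, and these vectors are annihilated by
the symbol `B(1) + z B(0) + z² B(-1)` at `z = b₁` resp. `z = b₂`; hence `k ↦ θ(k)ᵀ` solves the
homogeneous three-term recurrence, and so does every `D(·, i)` away from the first rows.
The boundary rows reduce to `B(0) θ(0)ᵀ + B(-1) θ(1)ᵀ = θ(0)`, `θ(0)² = 1` and
`θ(0) θ(1) + B(-1) θ(0)ᵀ θ(0) = 0`.
-/

section

variable (b₁ b₂ : ℝ)

lemma Bmat_zero :
    Bmat b₁ b₂ 0 = !![2 + b₁ ^ 2 + b₂ ^ 2, -1 - b₂ ^ 2; -1 - b₂ ^ 2, 1 + b₂ ^ 2] := by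
  simp [Bmat]

lemma Bmat_one : Bmat b₁ b₂ 1 = !![-b₁ - b₂, b₂; b₂, -b₂] := by
  simp [Bmat]

lemma Bmat_neg_one : Bmat b₁ b₂ (-1) = !![-b₁ - b₂, b₂; b₂, -b₂] := by
  simp [Bmat]

lemma toeplitz_thetaMat_transpose (k : ℕ) :
    Bmat b₁ b₂ 1 * (thetaMat b₁ b₂ k)ᵀ + Bmat b₁ b₂ 0 * (thetaMat b₁ b₂ (k + 1))ᵀ +
      Bmat b₁ b₂ (-1) * (thetaMat b₁ b₂ (k + 2))ᵀ = 0 := by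
  ext i j
  fin_cases i <;> fin_cases j <;>
    simp [Bmat_zero, Bmat_one, Bmat_neg_one, thetaMat, vecMul, dotProduct, Fin.sum_univ_two] <;>
    ring

lemma Bmat_zero_mul_add_Bmat_neg_one_mul :
    Bmat b₁ b₂ 0 * (thetaMat b₁ b₂ 0)ᵀ + Bmat b₁ b₂ (-1) * (thetaMat b₁ b₂ 1)ᵀ =
      thetaMat b₁ b₂ 0 := by
  ext i j
  fin_cases i <;> fin_cases j <;>
    simp [Bmat_zero, Bmat_neg_one, thetaMat, vecMul, dotProduct, Fin.sum_univ_two] <;> ring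

lemma thetaMat_zero_mul_self : thetaMat b₁ b₂ 0 * thetaMat b₁ b₂ 0 = 1 := by
  ext i j
  fin_cases i <;> fin_cases j <;> simp [thetaMat]

lemma thetaMat_zero_mul_one_add_Bmat_neg_one_mul :
    thetaMat b₁ b₂ 0 * thetaMat b₁ b₂ 1 +
      Bmat b₁ b₂ (-1) * ((thetaMat b₁ b₂ 0)ᵀ * thetaMat b₁ b₂ 0) = 0 := by
  ext i j
  fin_cases i <;> fin_cases j <;>
    simp [Bmat_neg_one, thetaMat, mul_apply, vecMul, dotProduct, Fin.sum_univ_two] <;> ring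

lemma Dmat_zero_right (k : ℕ) :
    Dmat b₁ b₂ k 0 = (thetaMat b₁ b₂ k)ᵀ * thetaMat b₁ b₂ 0 := by
  simp [Dmat]

lemma Dmat_zero_one : Dmat b₁ b₂ 0 1 = (thetaMat b₁ b₂ 0)ᵀ * thetaMat b₁ b₂ 1 := by
  simp [Dmat]

lemma Dmat_succ_one (k : ℕ) :
    Dmat b₁ b₂ (k + 1) 1 =
      (thetaMat b₁ b₂ (k + 1))ᵀ * thetaMat b₁ b₂ 1 + (thetaMat b₁ b₂ k)ᵀ * thetaMat b₁ b₂ 0 := by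
  simp [Dmat, Finset.sum_range_succ]

lemma toeplitz_Dmat_zero_right_zero :
    Bmat b₁ b₂ 0 * Dmat b₁ b₂ 0 0 + Bmat b₁ b₂ (-1) * Dmat b₁ b₂ 1 0 = 1 := by
  rw [Dmat_zero_right, Dmat_zero_right, ← Matrix.mul_assoc, ← Matrix.mul_assoc, ← add_mul,
    Bmat_zero_mul_add_Bmat_neg_one_mul, thetaMat_zero_mul_self]

lemma toeplitz_Dmat_zero_right_succ (k : ℕ) :
    Bmat b₁ b₂ 1 * Dmat b₁ b₂ k 0 + Bmat b₁ b₂ 0 * Dmat b₁ b₂ (k + 1) 0 +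
      Bmat b₁ b₂ (-1) * Dmat b₁ b₂ (k + 2) 0 = 0 := by
  simp only [Dmat_zero_right, ← Matrix.mul_assoc, ← add_mul, toeplitz_thetaMat_transpose,
    Matrix.zero_mul]

lemma toeplitz_Dmat_one_right_zero :
    Bmat b₁ b₂ 0 * Dmat b₁ b₂ 0 1 + Bmat b₁ b₂ (-1) * Dmat b₁ b₂ 1 1 = 0 := by
  rw [Dmat_zero_one, Dmat_succ_one, Matrix.mul_add, ← add_assoc, ← Matrix.mul_assoc,
    ← Matrix.mul_assoc, ← add_mul, Bmat_zero_mul_add_Bmat_neg_one_mul,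
    thetaMat_zero_mul_one_add_Bmat_neg_one_mul]

lemma toeplitz_Dmat_one_right_one :
    Bmat b₁ b₂ 1 * Dmat b₁ b₂ 0 1 + Bmat b₁ b₂ 0 * Dmat b₁ b₂ 1 1 +
      Bmat b₁ b₂ (-1) * Dmat b₁ b₂ 2 1 = 1 := by
  calc _ = (Bmat b₁ b₂ 1 * (thetaMat b₁ b₂ 0)ᵀ + Bmat b₁ b₂ 0 * (thetaMat b₁ b₂ 1)ᵀ +
          Bmat b₁ b₂ (-1) * (thetaMat b₁ b₂ 2)ᵀ) * thetaMat b₁ b₂ 1 +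
        (Bmat b₁ b₂ 0 * (thetaMat b₁ b₂ 0)ᵀ + Bmat b₁ b₂ (-1) * (thetaMat b₁ b₂ 1)ᵀ) *
          thetaMat b₁ b₂ 0 := by
        simp only [Dmat_zero_one, Dmat_succ_one, Matrix.mul_add, add_mul, Matrix.mul_assoc]; abel
    _ = 1 := by
        rw [toeplitz_thetaMat_transpose, Bmat_zero_mul_add_Bmat_neg_one_mul, thetaMat_zero_mul_self,
          Matrix.zero_mul, zero_add]

lemma toeplitz_Dmat_one_right_succ_succ (k : ℕ) :
    Bmat b₁ b₂ 1 * Dmat b₁ b₂ (k + 1) 1 + Bmat b₁ b₂ 0 * Dmat b₁ b₂ (k + 2) 1 +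
      Bmat b₁ b₂ (-1) * Dmat b₁ b₂ (k + 3) 1 = 0 := by
  calc _ = (Bmat b₁ b₂ 1 * (thetaMat b₁ b₂ (k + 1))ᵀ + Bmat b₁ b₂ 0 * (thetaMat b₁ b₂ (k + 2))ᵀ +
          Bmat b₁ b₂ (-1) * (thetaMat b₁ b₂ (k + 3))ᵀ) * thetaMat b₁ b₂ 1 +
        (Bmat b₁ b₂ 1 * (thetaMat b₁ b₂ k)ᵀ + Bmat b₁ b₂ 0 * (thetaMat b₁ b₂ (k + 1))ᵀ +
          Bmat b₁ b₂ (-1) * (thetaMat b₁ b₂ (k + 2))ᵀ) * thetaMat b₁ b₂ 0 := by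
        simp only [Dmat_succ_one, Matrix.mul_add, add_mul, Matrix.mul_assoc]; abel
    _ = 0 := by rw [toeplitz_thetaMat_transpose, toeplitz_thetaMat_transpose]; simp

end

/-- With `a(0), a(1) ∈ ℝ²`, `a(j) = 0` for `j ≥ 2`, and `c(j) = D(j,0)a(0) + D(j,1)a(1)`,
the vectors `c(j)` solve the block Toeplitz system `B(0)c(0) + B(−1)c(1) = a(0)` and
`B(1)c(j−1) + B(0)c(j) + B(−1)c(j+1) = a(j)` for `j ≥ 1`; in particular this expression
vanishes for `j ≥ 2`. -/
theorem stmt12 (b₁ b₂ : ℝ) (a0 a1 : Fin 2 → ℝ) :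
    let c : ℕ → Fin 2 → ℝ := fun j => Dmat b₁ b₂ j 0 *ᵥ a0 + Dmat b₁ b₂ j 1 *ᵥ a1
    (Bmat b₁ b₂ 0 *ᵥ c 0 + Bmat b₁ b₂ (-1) *ᵥ c 1 = a0) ∧
    (∀ j : ℕ, 1 ≤ j →
      Bmat b₁ b₂ 1 *ᵥ c (j - 1) + Bmat b₁ b₂ 0 *ᵥ c j + Bmat b₁ b₂ (-1) *ᵥ c (j + 1) =
        if j = 1 then a1 else 0) ∧
    (∀ j : ℕ, 2 ≤ j →
      Bmat b₁ b₂ 1 *ᵥ c (j - 1) + Bmat b₁ b₂ 0 *ᵥ c j + Bmat b₁ b₂ (-1) *ᵥ c (j + 1) = 0) := by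
  intro c
  have row_zero : Bmat b₁ b₂ 0 *ᵥ c 0 + Bmat b₁ b₂ (-1) *ᵥ c 1 =
      (Bmat b₁ b₂ 0 * Dmat b₁ b₂ 0 0 + Bmat b₁ b₂ (-1) * Dmat b₁ b₂ 1 0) *ᵥ a0 +
        (Bmat b₁ b₂ 0 * Dmat b₁ b₂ 0 1 + Bmat b₁ b₂ (-1) * Dmat b₁ b₂ 1 1) *ᵥ a1 := by
    simp only [c, mulVec_add, mulVec_mulVec, add_mulVec]; abel
  have row (k : ℕ) :
      Bmat b₁ b₂ 1 *ᵥ c k + Bmat b₁ b₂ 0 *ᵥ c (k + 1) + Bmat b₁ b₂ (-1) *ᵥ c (k + 2) =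
        (Bmat b₁ b₂ 1 * Dmat b₁ b₂ k 0 + Bmat b₁ b₂ 0 * Dmat b₁ b₂ (k + 1) 0 +
            Bmat b₁ b₂ (-1) * Dmat b₁ b₂ (k + 2) 0) *ᵥ a0 +
          (Bmat b₁ b₂ 1 * Dmat b₁ b₂ k 1 + Bmat b₁ b₂ 0 * Dmat b₁ b₂ (k + 1) 1 +
            Bmat b₁ b₂ (-1) * Dmat b₁ b₂ (k + 2) 1) *ᵥ a1 := by
    simp only [c, mulVec_add, mulVec_mulVec, add_mulVec]; abel
  have row_pos : ∀ j : ℕ, 1 ≤ j →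
      Bmat b₁ b₂ 1 *ᵥ c (j - 1) + Bmat b₁ b₂ 0 *ᵥ c j + Bmat b₁ b₂ (-1) *ᵥ c (j + 1) =
        if j = 1 then a1 else 0 := by
    rintro (_ | _ | k) hj
    · omega
    · show Bmat b₁ b₂ 1 *ᵥ c 0 + Bmat b₁ b₂ 0 *ᵥ c (0 + 1) + Bmat b₁ b₂ (-1) *ᵥ c (0 + 2) = a1
      rw [row, toeplitz_Dmat_zero_right_succ, toeplitz_Dmat_one_right_one, zero_mulVec,
        one_mulVec, zero_add]
    · show Bmat b₁ b₂ 1 *ᵥ c (k + 1) + Bmat b₁ b₂ 0 *ᵥ c (k + 1 + 1) +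
        Bmat b₁ b₂ (-1) *ᵥ c (k + 1 + 2) = 0
      rw [row, toeplitz_Dmat_zero_right_succ, toeplitz_Dmat_one_right_succ_succ, zero_mulVec,
        zero_mulVec, add_zero]
  refine ⟨?_, row_pos, fun j hj => by rw [row_pos j (by omega), if_neg (by omega)]⟩
  rw [row_zero, toeplitz_Dmat_zero_right_zero, toeplitz_Dmat_one_right_zero, one_mulVec,
    zero_mulVec, add_zero]
end
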